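/- For the specific 10×10 sparse matrix Q^Ours in which rows 1–5 form the pattern with zero diagonal and value 0.25 on the other four of the first five columns, and rows 6–10 each equal (0.25, 0.25, 0.25, 0.25, 0, 0, 0, 0, 0, 0), with Y uniform on {1,...,10}, the conditional entropy H(Y|Ȳ) in bits is approximately 3.0529; in particular it exceeds 3 bits. -/
import Mathlib


open Finset

/-- The sparse 10×10 transition matrix from the paper's counterexample:
rows 1–5 place mass 1/4 on each index in `{1,…,5}` other than the row index;
rows 6–10 place mass 1/4 on each of indices 1–4. -/
noncomputable def Qours : Fin 10 → Fin 10 → ℝ := fun i j =>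
  if (i : ℕ) < 5 then (if j ≠ i ∧ (j : ℕ) < 5 then 1 / 4 else 0)
  else (if (j : ℕ) < 4 then 1 / 4 else 0)

/-- Conditional entropy `H(Y|Ȳ)` in bits, with `Y` uniform on `Fin 10` and joint
law `P(Y=i, Ȳ=j) = Qours i j / 10`. -/
noncomputable def condEntBitsOurs : ℝ :=
  ∑ j, (∑ i, Qours i j / 10) *
    (∑ i, -(((Qours i j / 10) / ∑ i', Qours i' j / 10) *
      Real.logb 2 ((Qours i j / 10) / ∑ i', Qours i' j / 10)))

/-- `log₂ 9 > 28/9`, since `9⁹ > 2²⁸`. -/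
lemma logb_nine_gt : (28:ℝ)/9 < Real.logb 2 9 := by
  have h : Real.logb 2 ((2:ℝ)^(28:ℕ)) < Real.logb 2 ((9:ℝ)^(9:ℕ)) :=
    Real.logb_lt_logb (by norm_num) (by positivity) (by norm_num)
  simp [Real.logb_pow, Real.logb_self_eq_one] at h
  linarith

lemma logb_quarter : Real.logb 2 ((1:ℝ)/4) = -2 := by
  rw [show (1:ℝ)/4 = ((2:ℝ)^(2:ℕ))⁻¹ by norm_num, Real.logb_inv, Real.logb_pow]
  simp

lemma logb_ninth : Real.logb 2 ((1:ℝ)/9) = -Real.logb 2 9 := by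
  rw [one_div, Real.logb_inv]

/-- For the explicit sparse matrix `Qours` with `Y` uniform on `{1,…,10}`, the
conditional entropy exceeds 3 bits (it is ≈ 3.0529 bits). -/
theorem ours_condEntropy_gt_three_bits : 3 < condEntBitsOurs := by
  unfold condEntBitsOurs
  simp only [Fin.sum_univ_succ, Fin.sum_univ_zero, Qours]
  norm_num [Fin.ext_iff]
  rw [logb_quarter, logb_ninth]
  have := logb_nine_gt
  linarith
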